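/- For all RC_Λ-formulas φ, ψ: (1) if S(ψ) ≠ ∅ and φ ⊢_{RC_Λ} ψ, then max S(φ) ≥ max S(ψ) (in particular S(φ) ≠ ∅); (2) if S(φ) = ∅ and φ ⊢_{RC_Λ} ψ, then S(ψ) = ∅. -/

import Mathlib

open Ordinal

/-- The binary Veblen function: `veblen 0 β = ω ^ β` and, for `α > 0`, `veblen α`
enumerates the common fixed points of the functions `veblen ξ` for `ξ < α`. -/
noncomputable def veblen (α : Ordinal.{0}) : Ordinal.{0} → Ordinal.{0} :=
  if α = 0 then fun β => omega0 ^ β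
  else derivFamily.{0, 0} (familyOfBFamily α fun ξ h => veblen ξ)
termination_by α
decreasing_by exact h

/-- The Feferman–Schütte ordinal `Γ₀`: the least nonzero ordinal closed under the
binary Veblen function. -/
noncomputable def Gamma0 : Ordinal.{0} :=
  sInf {L | 0 < L ∧ ∀ α < L, ∀ β < L, _root_.veblen α β < L}

/-- Strictly positive modal formulas with modalities indexed by ordinals. -/
inductive RCF : Type 1 where
  | top : RCF
  | var : ℕ → RCF
  | and : RCF → RCF → RCF
  | dia : Ordinal.{0} → RCF → RCF

/-- `φ.bounded Λ` holds iff all modalities occurring in `φ` are `< Λ`,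
i.e. iff `φ` is an `RC_Λ`-formula. -/
def RCF.bounded (Λ : Ordinal) : RCF → Prop
  | .top => True
  | .var _ => True
  | .and φ ψ => φ.bounded Λ ∧ ψ.bounded Λ
  | .dia α φ => α < Λ ∧ φ.bounded Λ

/-- Worms: formulas built from `⊤` by prefixing modalities. -/
def RCF.isWorm : RCF → Prop
  | .top => True
  | .var _ => False
  | .and _ _ => False
  | .dia _ φ => φ.isWorm

/-- The signature of a formula: the set of ordinals occurring in its modalities. -/
def RCF.sig : RCF → Set Ordinal
  | .top => ∅
  | .var _ => ∅
  | .and φ ψ => φ.sig ∪ ψ.sig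
  | .dia α φ => insert α φ.sig

/-- Derivability in the reflection calculus `RC_Λ`. -/
inductive RCder (Λ : Ordinal) : RCF → RCF → Prop where
  | id : ∀ φ, φ.bounded Λ → RCder Λ φ φ
  | topI : ∀ φ, φ.bounded Λ → RCder Λ φ .top
  | andE₁ : ∀ φ ψ, φ.bounded Λ → ψ.bounded Λ → RCder Λ (.and φ ψ) φ
  | andE₂ : ∀ φ ψ, φ.bounded Λ → ψ.bounded Λ → RCder Λ (.and φ ψ) ψ
  | diaTrans : ∀ α φ, α < Λ → φ.bounded Λ → RCder Λ (.dia α (.dia α φ)) (.dia α φ)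
  | diaDown : ∀ α β φ, β < α → α < Λ → φ.bounded Λ → RCder Λ (.dia α φ) (.dia β φ)
  | diaConj : ∀ α β φ ψ, β < α → α < Λ → φ.bounded Λ → ψ.bounded Λ →
      RCder Λ (.and (.dia α φ) (.dia β ψ)) (.dia α (.and φ (.dia β ψ)))
  | andI : ∀ {φ ψ χ}, RCder Λ φ ψ → RCder Λ φ χ → RCder Λ φ (.and ψ χ)
  | cut : ∀ {φ ψ χ}, RCder Λ φ ψ → RCder Λ ψ χ → RCder Λ φ χ
  | diaMono : ∀ {φ ψ} (α), α < Λ → RCder Λ φ ψ → RCder Λ (.dia α φ) (.dia α ψ)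

/-- Membership in `W_{Γ₀}`: worms of `RC_{Γ₀}`. -/
def isGWorm (A : RCF) : Prop := A.isWorm ∧ A.bounded Gamma0

/-- `WormLT B A` is the consistency ordering `B <₀ A` on worms of `W_{Γ₀}`:
`A ⊢_{RC_{Γ₀}} ⟨0⟩B`. -/
def WormLT (B A : RCF) : Prop :=
  isGWorm A ∧ isGWorm B ∧ RCder Gamma0 A (.dia 0 B)

/- The order type `o A` of a worm, defined recursively by
`o A = sup_{B <₀ A} (o B + 1)` (well-defined since `<₀` is well-founded). -/
open Classical in
noncomputable def wormO (A : RCF) : Ordinal.{0} :=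
  if h : WellFounded WormLT then
    h.fix (C := fun _ => Ordinal.{0})
      (fun B ih => ⨆ C : {C : RCF // WormLT C B}, (ih C.1 C.2 + 1)) A
  else 0

/-!
Every rule of `RC_Λ` only copies, drops or lowers modalities: each ordinal occurring in
the conclusion lies below some ordinal occurring in the premise. So the signature of the
conclusion lies in the lower closure of that of the premise, and both claims follow since
signatures are finite.
-/

lemma RCF.sig_finite : ∀ φ : RCF, φ.sig.Finite
  | .top => Set.finite_empty
  | .var _ => Set.finite_empty
  | .and φ ψ => (sig_finite φ).union (sig_finite ψ)
  | .dia _ φ => (sig_finite φ).insert _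

lemma RCder.sig_subset_lowerClosure {Λ : Ordinal} {φ ψ : RCF} (h : RCder Λ φ ψ) :
    ψ.sig ⊆ lowerClosure φ.sig := by
  induction h with
  | id => exact subset_lowerClosure
  | topI => exact Set.empty_subset _
  | andE₁ => exact Set.subset_union_left.trans subset_lowerClosure
  | andE₂ => exact Set.subset_union_right.trans subset_lowerClosure
  | diaTrans => exact Set.subset_insert _ _ |>.trans subset_lowerClosure
  | diaDown α β φ hβα =>
      exact Set.insert_subset ⟨α, Set.mem_insert _ _, hβα.le⟩
        ((Set.subset_insert _ _).trans subset_lowerClosure)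
  | diaConj =>
      refine subset_of_eq_of_subset ?_ subset_lowerClosure
      simp only [RCF.sig, Set.insert_union]
  | andI _ _ ih₁ ih₂ => exact Set.union_subset ih₁ ih₂
  | cut _ _ ih₁ ih₂ => exact ih₂.trans (lowerClosure_le.2 ih₁)
  | diaMono α _ _ ih =>
      exact Set.insert_subset_insert ih |>.trans
        (Set.insert_subset ⟨α, Set.mem_insert _ _, le_rfl⟩
          (lowerClosure_mono (Set.subset_insert _ _)))

lemma csSup_le_csSup_of_subset_lowerClosure {α : Type*} [ConditionallyCompleteLattice α]
    {s t : Set α} (hs : s.Nonempty) (ht : BddAbove t) (hst : s ⊆ lowerClosure t) :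
    sSup s ≤ sSup t :=
  csSup_le hs fun _ hx =>
    let ⟨_, hy, hxy⟩ := hst hx
    le_csSup_of_le ht hy hxy

/-- (1) If `S(ψ) ≠ ∅` and `φ ⊢_{RC_Λ} ψ`, then `max S(φ) ≥ max S(ψ)` (in
particular `S(φ) ≠ ∅`); (2) if `S(φ) = ∅` and `φ ⊢_{RC_Λ} ψ`, then
`S(ψ) = ∅`. -/
theorem sig_of_der (Λ : Ordinal) (φ ψ : RCF) :
    ((RCF.sig ψ).Nonempty → RCder Λ φ ψ →
      (RCF.sig φ).Nonempty ∧ sSup (RCF.sig ψ) ≤ sSup (RCF.sig φ)) ∧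
    (RCF.sig φ = ∅ → RCder Λ φ ψ → RCF.sig ψ = ∅) := by
  refine ⟨fun hψ hder => ?_, fun hφ hder => ?_⟩
  · have hsub := hder.sig_subset_lowerClosure
    obtain ⟨_, hx⟩ := hψ
    obtain ⟨y, hy, -⟩ := hsub hx
    exact ⟨⟨y, hy⟩, csSup_le_csSup_of_subset_lowerClosure ⟨_, hx⟩ φ.sig_finite.bddAbove hsub⟩
  · simpa [hφ] using hder.sig_subset_lowerClosure
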